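/- Consider the polar unicycle under the nonovershooting feedback with gains k₁,k₂,k₃,k₄ > 0. Along every closed-loop solution (ρ,δ,γ) on an interval I with ρ(t) > 0 and |δ(t)| < π for all t ∈ I, the function V_{δγ}(t) = 4 tan²(δ(t)/2) + q² z(t)² is differentiable and satisfies dV_{δγ}/dt(t) ≤ −(6k₁k₂/N(δ(t))) (1 + tan²(δ(t)/2)) tan²(δ(t)/2) − 2k₄ q² z(t)² for all t ∈ I. -/

import Mathlib

/-!
STATEMENT 17: Nonovershooting feedback for the polar unicycle: along every
closed-loop solution with ρ > 0 and |δ| < π, the function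
V_{δγ} = 4 tan²(δ/2) + q² z² is differentiable and its derivative satisfies
dV_{δγ}/dt ≤ −(6k₁k₂/N(δ))(1 + tan²(δ/2)) tan²(δ/2) − 2k₄ q² z².
-/
noncomputable section

open Real

/-- backstepping variable z = γ + (1/2) arctan(4k₂ tan(δ/2)) -/
def zN (k₂ δ γ : ℝ) : ℝ := γ + (1 / 2) * Real.arctan (4 * k₂ * Real.tan (δ / 2))

/-- N(δ) = √(1 + 16k₂² tan²(δ/2)) -/
def NN (k₂ δ : ℝ) : ℝ := Real.sqrt (1 + 16 * k₂ ^ 2 * Real.tan (δ / 2) ^ 2)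

/-- ψ(z,γ) = (sin(2z−2γ) + sin(2γ))/(2z) for z ≠ 0, ψ(0,γ) = cos(2γ) -/
def psiN (z γ : ℝ) : ℝ :=
  if z = 0 then Real.cos (2 * γ)
  else (Real.sin (2 * z - 2 * γ) + Real.sin (2 * γ)) / (2 * z)

/-- nonovershooting forward velocity v = k₁ ρ cos γ -/
def vN (k₁ ρ γ : ℝ) : ℝ := k₁ * ρ * Real.cos γ

/-- ω̃ of the nonovershooting feedback -/
def omTildeN (k₁ k₂ k₃ k₄ δ γ : ℝ) : ℝ :=
  (k₄ + (k₃ / k₂) * psiN (zN k₂ δ γ) γ ^ 2 * NN k₂ δ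
      * (1 + Real.tan (δ / 2) ^ 2)) * zN k₂ δ γ
    + (k₁ * k₂ / 2) * Real.sin (2 * γ)
        / (Real.cos (δ / 2) ^ 2 + 16 * k₂ ^ 2 * Real.sin (δ / 2) ^ 2)

/-- nonovershooting angular velocity ω = (k₁/2) sin(2γ) + ω̃ -/
def omN (k₁ k₂ k₃ k₄ δ γ : ℝ) : ℝ :=
  (k₁ / 2) * Real.sin (2 * γ) + omTildeN k₁ k₂ k₃ k₄ δ γ

/-
Along the closed loop, δ' = (k₁/2) sin 2γ and γ' = -ω̃. The last summand of ω̃ cancels exactly the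
derivative of (1/2) arctan(4k₂ tan(δ/2)), because cos²(δ/2) + 16k₂² sin²(δ/2) = N²/(1 + tan²(δ/2));
hence z' = -(k₄ + (k₃/k₂) ψ² N (1 + tan²(δ/2))) z. Since 2z - 2γ = arctan(4k₂ tan(δ/2)), the definition
of ψ gives sin 2γ = 2zψ - 4k₂ tan(δ/2)/N, and the cross term 4k₁ tan(δ/2)(1 + tan²(δ/2)) zψ in V'
is absorbed by the ψ² damping term after completing the square in k₂ tan(δ/2) - N z ψ.
-/

theorem HasDerivAt.tan {f : ℝ → ℝ} {f' x : ℝ} (hf : HasDerivAt f f' x)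
    (hx : Real.cos (f x) ≠ 0) :
    HasDerivAt (fun s => Real.tan (f s)) ((1 + Real.tan (f x) ^ 2) * f') x := by
  have h := (hasDerivAt_tan hx).comp x hf
  rwa [one_div, ← inv_one_add_tan_sq hx, inv_inv] at h

theorem cos_sq_add_mul_sin_sq {x : ℝ} (a : ℝ) (hx : cos x ≠ 0) :
    cos x ^ 2 + a * sin x ^ 2 = (1 + a * tan x ^ 2) / (1 + tan x ^ 2) := by
  rw [← tan_mul_cos hx, div_eq_mul_inv, inv_one_add_tan_sq hx]
  ring

theorem NN_pos (k₂ δ : ℝ) : 0 < NN k₂ δ :=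
  sqrt_pos.mpr (by positivity)

theorem vN_div_mul_sin (k₁ : ℝ) {ρ : ℝ} (γ : ℝ) (hρ : ρ ≠ 0) :
    vN k₁ ρ γ / ρ * sin γ = k₁ / 2 * sin (2 * γ) := by
  rw [vN, sin_two_mul]
  field_simp

theorem vN_div_mul_sin_sub_omN (k₁ k₂ k₃ k₄ δ : ℝ) {ρ : ℝ} (γ : ℝ) (hρ : ρ ≠ 0) :
    vN k₁ ρ γ / ρ * sin γ - omN k₁ k₂ k₃ k₄ δ γ = -omTildeN k₁ k₂ k₃ k₄ δ γ := by
  rw [vN_div_mul_sin k₁ γ hρ, omN]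
  ring

theorem two_mul_mul_psiN (z γ : ℝ) :
    2 * z * psiN z γ = sin (2 * z - 2 * γ) + sin (2 * γ) := by
  by_cases hz : z = 0
  · simp [psiN, hz]
  · rw [psiN, if_neg hz]
    field_simp

theorem sin_two_mul_eq_sub (k₂ δ γ : ℝ) :
    sin (2 * γ) = 2 * zN k₂ δ γ * psiN (zN k₂ δ γ) γ - 4 * k₂ * tan (δ / 2) / NN k₂ δ := by
  have h : 2 * zN k₂ δ γ - 2 * γ = arctan (4 * k₂ * tan (δ / 2)) := by
    rw [zN]
    ring
  rw [two_mul_mul_psiN, h, sin_arctan, NN, mul_pow]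
  ring_nf

theorem hasDerivAt_zN {k₁ k₂ k₃ k₄ : ℝ} {δ γ : ℝ → ℝ} {t : ℝ} (hc : cos (δ t / 2) ≠ 0)
    (hδ : HasDerivAt δ (k₁ / 2 * sin (2 * γ t)) t)
    (hγ : HasDerivAt γ (-omTildeN k₁ k₂ k₃ k₄ (δ t) (γ t)) t) :
    HasDerivAt (fun s => zN k₂ (δ s) (γ s))
      (-(k₄ + k₃ / k₂ * psiN (zN k₂ (δ t) (γ t)) (γ t) ^ 2 * NN k₂ (δ t)
          * (1 + tan (δ t / 2) ^ 2)) * zN k₂ (δ t) (γ t)) t := by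
  have harctan := (((hδ.div_const 2).tan hc).const_mul (4 * k₂)).arctan
  refine (hγ.add (harctan.const_mul (1 / 2))).congr_deriv ?_
  have hN : 0 < 1 + 16 * k₂ ^ 2 * tan (δ t / 2) ^ 2 := by positivity
  rw [omTildeN, cos_sq_add_mul_sin_sq _ hc]
  field_simp
  ring

theorem coupling_sub_damping_le {k₁ k₂ N : ℝ} (hk₁ : 0 ≤ k₁) (hk₂ : 0 < k₂) (hN : 0 < N)
    (T z ψ : ℝ) :
    2 * k₁ * T * (1 + T ^ 2) * (2 * z * ψ - 4 * k₂ * T / N)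
        - 2 * (k₁ / k₂) * ψ ^ 2 * N * (1 + T ^ 2) * z ^ 2
      ≤ -(6 * k₁ * k₂ / N) * (1 + T ^ 2) * T ^ 2 := by
  have hgap : -(6 * k₁ * k₂ / N) * (1 + T ^ 2) * T ^ 2
      - (2 * k₁ * T * (1 + T ^ 2) * (2 * z * ψ - 4 * k₂ * T / N)
        - 2 * (k₁ / k₂) * ψ ^ 2 * N * (1 + T ^ 2) * z ^ 2)
      = 2 * k₁ * (1 + T ^ 2) * (k₂ * T - N * z * ψ) ^ 2 / (k₂ * N) := by
    field_simp
    ring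
  have : 0 ≤ 2 * k₁ * (1 + T ^ 2) * (k₂ * T - N * z * ψ) ^ 2 / (k₂ * N) := by positivity
  linarith

theorem nonovershooting_Lyapunov_derivative_bound_general
    (k₁ k₂ k₃ k₄ : ℝ) (hk₁ : 0 < k₁) (hk₂ : 0 < k₂) (hk₃ : 0 < k₃)
    (I : Set ℝ) (ρ δ γ : ℝ → ℝ)
    (hρpos : ∀ t ∈ I, 0 < ρ t)
    (hδπ : ∀ t ∈ I, |δ t| < Real.pi)
    (hδ : ∀ t ∈ I,
      HasDerivAt δ ((vN k₁ (ρ t) (γ t) / ρ t) * Real.sin (γ t)) t)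
    (hγ : ∀ t ∈ I,
      HasDerivAt γ ((vN k₁ (ρ t) (γ t) / ρ t) * Real.sin (γ t)
        - omN k₁ k₂ k₃ k₄ (δ t) (γ t)) t) :
    ∀ t ∈ I, ∃ D : ℝ,
      HasDerivAt
        (fun s => 4 * Real.tan (δ s / 2) ^ 2
          + Real.sqrt (k₁ / k₃) ^ 2 * zN k₂ (δ s) (γ s) ^ 2) D t
      ∧ D ≤ -(6 * k₁ * k₂ / NN k₂ (δ t)) * (1 + Real.tan (δ t / 2) ^ 2)
              * Real.tan (δ t / 2) ^ 2
            - 2 * k₄ * Real.sqrt (k₁ / k₃) ^ 2 * zN k₂ (δ t) (γ t) ^ 2 := by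
  intro t ht
  have hρ : ρ t ≠ 0 := (hρpos t ht).ne'
  have hc : cos (δ t / 2) ≠ 0 := by
    obtain ⟨hlo, hhi⟩ := abs_lt.mp (hδπ t ht)
    exact (cos_pos_of_mem_Ioo ⟨by linarith, by linarith⟩).ne'
  have hδ' := vN_div_mul_sin k₁ (γ t) hρ ▸ hδ t ht
  have hγ' := vN_div_mul_sin_sub_omN k₁ k₂ k₃ k₄ (δ t) (γ t) hρ ▸ hγ t ht
  have htan := (hδ'.div_const 2).tan hc
  have hz := hasDerivAt_zN hc hδ' hγ'
  refine ⟨_, ((htan.pow 2).const_mul 4).add ((hz.pow 2).const_mul _), ?_⟩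
  set T := tan (δ t / 2)
  set z := zN k₂ (δ t) (γ t)
  set N := NN k₂ (δ t)
  have hsq := coupling_sub_damping_le hk₁.le hk₂ (NN_pos k₂ (δ t)) T z (psiN z (γ t))
  rw [← sin_two_mul_eq_sub] at hsq
  rw [sq_sqrt (div_pos hk₁ hk₃).le]
  calc _ = 2 * k₁ * T * (1 + T ^ 2) * sin (2 * γ t)
          - 2 * (k₁ / k₂) * psiN z (γ t) ^ 2 * N * (1 + T ^ 2) * z ^ 2
          - 2 * k₄ * (k₁ / k₃) * z ^ 2 := by
        field_simp
        ring
    _ ≤ _ := by linarith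

theorem nonovershooting_Lyapunov_derivative_bound
    (k₁ k₂ k₃ k₄ : ℝ) (hk₁ : 0 < k₁) (hk₂ : 0 < k₂) (hk₃ : 0 < k₃) (hk₄ : 0 < k₄)
    (I : Set ℝ) (ρ δ γ : ℝ → ℝ)
    (hρpos : ∀ t ∈ I, 0 < ρ t)
    (hδπ : ∀ t ∈ I, |δ t| < Real.pi)
    (hρ : ∀ t ∈ I,
      HasDerivAt ρ (-(vN k₁ (ρ t) (γ t)) * Real.cos (γ t)) t)
    (hδ : ∀ t ∈ I,
      HasDerivAt δ ((vN k₁ (ρ t) (γ t) / ρ t) * Real.sin (γ t)) t)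
    (hγ : ∀ t ∈ I,
      HasDerivAt γ ((vN k₁ (ρ t) (γ t) / ρ t) * Real.sin (γ t)
        - omN k₁ k₂ k₃ k₄ (δ t) (γ t)) t) :
    ∀ t ∈ I, ∃ D : ℝ,
      HasDerivAt
        (fun s => 4 * Real.tan (δ s / 2) ^ 2
          + Real.sqrt (k₁ / k₃) ^ 2 * zN k₂ (δ s) (γ s) ^ 2) D t
      ∧ D ≤ -(6 * k₁ * k₂ / NN k₂ (δ t)) * (1 + Real.tan (δ t / 2) ^ 2)
              * Real.tan (δ t / 2) ^ 2
            - 2 * k₄ * Real.sqrt (k₁ / k₃) ^ 2 * zN k₂ (δ t) (γ t) ^ 2 :=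
  nonovershooting_Lyapunov_derivative_bound_general k₁ k₂ k₃ k₄ hk₁ hk₂ hk₃ I ρ δ γ hρpos hδπ hδ hγ

end
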